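/- Let G = (V,E) be a simple graph and H = {H_v}_{v∈V} a family of nontrivial locally finite groups. Then the map v ↦ H̃_v is a graph isomorphism from G onto the maximal locally finite subgroup graph MaxSub_loc(M(G,H)); in particular MaxSub_loc(M(G,H)) ≅ G. -/

import Mathlib

set_option linter.unusedSectionVars false

open Monoid

namespace PaperPG

/-! ### Generic notions: letters, reduced / cyclically reduced words, reduced forms -/

section Letters

variable {ι : Type*} (H : ι → Type*) [∀ i, Group (H i)]

/-- A letter: a vertex/index together with an element of the corresponding group. -/
abbrev Ltr : Type _ := (i : ι) × H i

/-- A (combinatorially) reduced word: all letters are non-identity and adjacent letters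
belong to distinct factors. -/
def IsRed (l : List (Ltr H)) : Prop :=
  (∀ x ∈ l, x.2 ≠ 1) ∧ l.Chain' fun a b => a.1 ≠ b.1

/-- A cyclically reduced word: reduced, and if it has length at least `2`, its first and last
letters belong to distinct factors. -/
def IsCycRed (l : List (Ltr H)) : Prop :=
  IsRed H l ∧ ∀ a ∈ l.head?, ∀ b ∈ l.getLast?, 2 ≤ l.length → a.1 ≠ b.1

theorem isRed_nil : IsRed H ([] : List (Ltr H)) := by
  refine ⟨by simp, ?_⟩
  first
    | exact List.IsChain.nil
    | exact List.chain'_nil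
    | simp [List.Chain']

theorem isCycRed_nil : IsCycRed H ([] : List (Ltr H)) := by
  refine ⟨isRed_nil H, ?_⟩
  simp

theorem isCycRed_single (x : Ltr H) (hx : x.2 ≠ 1) : IsCycRed H [x] := by
  refine ⟨⟨by simpa using hx, ?_⟩, ?_⟩
  · first
      | exact List.IsChain.singleton _
      | exact List.chain'_singleton _
      | simp [List.Chain']
  simp

variable [DecidableEq ι] [∀ i, DecidableEq (H i)]

/-- The element of the free product `∗_{i} H i` determined by a word. -/
noncomputable def listProd (l : List (Ltr H)) : CoprodI H :=
  (l.map fun x => CoprodI.of x.2).prod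

/-- The reduced form of a word: the unique reduced word representing the product of its
letters in the free product `∗_i H i`. -/
noncomputable def red (l : List (Ltr H)) : List (Ltr H) :=
  (CoprodI.Word.equiv (listProd H l)).toList

/-- The set of indices (vertices) occurring in a word. -/
def verts (l : List (Ltr H)) : Set ι := {i | ∃ x ∈ l, x.1 = i}

/-- The formal inverse of a word: invert every letter and reverse. -/
def rawInv (l : List (Ltr H)) : List (Ltr H) :=
  (l.map fun x => (⟨x.1, x.2⁻¹⟩ : Ltr H)).reverse

end Letters

/-! ### Homomorphisms of (the underlying data of) partial groups -/

/-- `f` is a homomorphism of partial groups, from the partial group with domain `D₁` and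
product `P₁` to the one with domain `D₂` and product `P₂`. -/
def IsHom {M N : Type*} (D₁ : Set (List M)) (P₁ : List M → M)
    (D₂ : Set (List N)) (P₂ : List N → N) (f : M → N) : Prop :=
  (∀ u ∈ D₁, u.map f ∈ D₂) ∧ ∀ u ∈ D₁, P₂ (u.map f) = f (P₁ u)

theorem isHom_id {M : Type*} (D : Set (List M)) (P : List M → M) : IsHom D P D P id := by
  constructor <;> intro u hu <;> simp [hu]

theorem IsHom.comp {M₁ M₂ M₃ : Type*} {D₁ : Set (List M₁)} {P₁ : List M₁ → M₁}
    {D₂ : Set (List M₂)} {P₂ : List M₂ → M₂} {D₃ : Set (List M₃)} {P₃ : List M₃ → M₃}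
    {g : M₂ → M₃} {f : M₁ → M₂} (hg : IsHom D₂ P₂ D₃ P₃ g) (hf : IsHom D₁ P₁ D₂ P₂ f) :
    IsHom D₁ P₁ D₃ P₃ (g ∘ f) := by
  refine ⟨fun u hu => ?_, fun u hu => ?_⟩
  · rw [← List.map_map]
    exact hg.1 _ (hf.1 u hu)
  · rw [← List.map_map, hg.2 _ (hf.1 u hu), hf.2 u hu]
    rfl

/-! ### The partial group `M(G, H)` associated to a decorated graph -/

section Graph

variable {ι : Type*} (H : ι → Type*) [∀ i, Group (H i)]
  [DecidableEq ι] [∀ i, DecidableEq (H i)] (G : SimpleGraph ι)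

/-- Membership in `M(G,H)`: a cyclically reduced word whose set of vertices is a clique. -/
def Mem (l : List (Ltr H)) : Prop := IsCycRed H l ∧ G.IsClique (verts H l)

theorem mem_nil : Mem H G [] := by
  refine ⟨isCycRed_nil H, ?_⟩
  simp [verts, SimpleGraph.isClique_iff, Set.Pairwise]

theorem mem_single (v : ι) (h : H v) (hne : h ≠ 1) : Mem H G [⟨v, h⟩] := by
  refine ⟨isCycRed_single H _ hne, ?_⟩
  simp only [verts, SimpleGraph.isClique_iff, Set.Pairwise, List.mem_singleton]
  rintro a ⟨x, hx, rfl⟩ b ⟨y, hy, rfl⟩ hne'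
  subst hx; subst hy
  exact absurd rfl hne'

/-- A word with letters elements of `M(G,H)` is in the domain `D(G,H)` iff all its letters are
elements of `M(G,H)`, all occurring vertices lie in a common clique, and the reduced form of
any subproduct `u_i ⋯ u_j` is cyclically reduced. -/
def InD (W : List (List (Ltr H))) : Prop :=
  (∀ u ∈ W, Mem H G u) ∧
  G.IsClique {i | ∃ u ∈ W, i ∈ verts H u} ∧
  ∀ i j : ℕ, i ≤ j → j < W.length →
    IsCycRed H (red H (((W.drop i).take (j + 1 - i)).flatten))

/-- The underlying set of the partial group `M(G,H)`. -/
def Carrier : Type _ := {l : List (Ltr H) // Mem H G l}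

/-- The domain of the partial group `M(G,H)`. -/
def pgD : Set (List (Carrier H G)) := {W | InD H G (W.map Subtype.val)}

/-- The unit of the partial group `M(G,H)`: the empty word. -/
def one : Carrier H G := ⟨[], mem_nil H G⟩

/-- The product map of the partial group `M(G,H)`: the reduced form of the concatenation
(junk value `1` outside of the domain). -/
noncomputable def pgPi (W : List (Carrier H G)) : Carrier H G := by
  classical exact if h : Mem H G (red H (W.map Subtype.val).flatten) then ⟨_, h⟩ else one H G

/-- The inversion of the partial group `M(G,H)` (junk value `1` if the result were not a
member, which never happens). -/
noncomputable def invCar (x : Carrier H G) : Carrier H G := by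
  classical exact if h : Mem H G (rawInv H x.val) then ⟨_, h⟩ else one H G

/-- The subset `H̃ᵥ` of `M(G,H)`: the empty word together with the one-letter words with
letter a nontrivial element of `H v`. -/
def Htilde (v : ι) : Set (Carrier H G) :=
  {x | x.val = [] ∨ ∃ h : H v, h ≠ 1 ∧ x.val = [⟨v, h⟩]}

end Graph

/-! ### Induced maps -/

section Induced

variable {ι ι' : Type*} (H : ι → Type*) [∀ i, Group (H i)]
  [DecidableEq ι] [∀ i, DecidableEq (H i)] (G : SimpleGraph ι)
  (H' : ι' → Type*) [∀ i, Group (H' i)]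
  [DecidableEq ι'] [∀ i, DecidableEq (H' i)] (G' : SimpleGraph ι')

/-- The letterwise map on words induced by a map of vertices `fG` and group homomorphisms
`fH v : H v →* H' (fG v)`. -/
def rawInduced (fG : ι → ι') (fH : ∀ i, H i →* H' (fG i)) (l : List (Ltr H)) :
    List (Ltr H') :=
  l.map fun x => ⟨fG x.1, fH x.1 x.2⟩

/-- The map `M(f_G, {f_v}) : M(G,H) → M(G',H')` (junk value `1` if the image word were not a
member; this never happens when the `fH v` are injective). -/
noncomputable def inducedCar (fG : ι → ι') (fH : ∀ i, H i →* H' (fG i))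
    (x : Carrier H G) : Carrier H' G' := by
  classical exact if h : Mem H' G' (rawInduced H H' fG fH x.val) then ⟨_, h⟩ else one H' G'

/-- A homomorphism of partial groups `M(G,H) → M(G',H')` has torsion-free kernel if the only
element of finite order (as an element of the ambient free product) sent to `1` is `1`. -/
def TFKer (f : Carrier H G → Carrier H' G') : Prop :=
  ∀ x : Carrier H G, f x = one H' G' → IsOfFinOrder (listProd H x.val) → x = one H G

end Induced

/-! ### Automorphism groups -/

section Aut

variable {ι : Type*} (H : ι → Type*) [∀ i, Group (H i)]
  [DecidableEq ι] [∀ i, DecidableEq (H i)] (G : SimpleGraph ι)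

/-- The automorphism group of the partial group `M(G,H)`, as a subgroup of the permutation
group of its carrier: bijections that are homomorphisms in both directions. -/
noncomputable def pgAut : Subgroup (Equiv.Perm (Carrier H G)) where
  carrier := {f | IsHom (pgD H G) (pgPi H G) (pgD H G) (pgPi H G) f ∧
    IsHom (pgD H G) (pgPi H G) (pgD H G) (pgPi H G) f.symm}
  one_mem' := ⟨isHom_id _ _, isHom_id _ _⟩
  mul_mem' := by
    rintro f g ⟨hf, hf'⟩ ⟨hg, hg'⟩
    exact ⟨hf.comp hg, hg'.comp hf'⟩
  inv_mem' := by
    rintro f ⟨hf, hf'⟩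
    first
      | exact ⟨hf', hf⟩
      | exact ⟨hf', by simpa [Equiv.Perm.inv_def] using hf⟩

/-- The automorphism group of a simple graph, as a subgroup of the permutation group of its
vertices: bijections such that both the map and its inverse send edges to edges. -/
def graphAut : Subgroup (Equiv.Perm ι) where
  carrier := {σ | (∀ a b, G.Adj a b → G.Adj (σ a) (σ b)) ∧
    (∀ a b, G.Adj a b → G.Adj (σ.symm a) (σ.symm b))}
  one_mem' := ⟨fun a b h => h, fun a b h => h⟩
  mul_mem' := by
    rintro f g ⟨hf, hf'⟩ ⟨hg, hg'⟩
    exact ⟨fun a b h => hf _ _ (hg _ _ h), fun a b h => hg' _ _ (hf' _ _ h)⟩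
  inv_mem' := by
    rintro f ⟨hf, hf'⟩
    first
      | exact ⟨hf', hf⟩
      | exact ⟨hf', by simpa [Equiv.Perm.inv_def] using hf⟩

/-- An automorphism `f` of `M(G,H)` covers the vertex map `σ` if for every vertex `v`,
`f` sends the nontrivial elements of `H̃ᵥ` into `H̃_{σ v}`. -/
def CoversVia (f : Carrier H G → Carrier H G) (σ : ι → ι) : Prop :=
  ∀ (v : ι) (h : H v) (hne : h ≠ 1),
    ∃ h' : H (σ v), h' ≠ 1 ∧ (f ⟨[⟨v, h⟩], mem_single H G v h hne⟩).val = [⟨σ v, h'⟩]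

end Aut

/-! ### Subgroups and locally finite subgroups of partial groups -/

/-- A subset `N` is a subgroup of the partial group with data `(D, P, inv)`: it is closed
under inversion, every word with letters in `N` is in the domain `D`, and `P` maps such
words into `N`. -/
def IsSubgroupOf {M : Type*} (D : Set (List M)) (P : List M → M) (inv : M → M)
    (N : Set M) : Prop :=
  (∀ x ∈ N, inv x ∈ N) ∧ ∀ W : List M, (∀ u ∈ W, u ∈ N) → W ∈ D ∧ P W ∈ N

/-- A subgroup `N` of a partial group is locally finite: every finite subset of `N` is
contained in a finite subgroup contained in `N` (i.e. every finitely generated subgroup of the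
group `N` is finite). -/
def IsLocFinSubgroupOf {M : Type*} (D : Set (List M)) (P : List M → M) (inv : M → M)
    (N : Set M) : Prop :=
  IsSubgroupOf D P inv N ∧
    ∀ S : Set M, S ⊆ N → S.Finite →
      ∃ K : Set M, S ⊆ K ∧ K ⊆ N ∧ IsSubgroupOf D P inv K ∧ K.Finite

end PaperPG

namespace PaperPG

/-- A group is locally finite if every finitely generated subgroup is finite. -/
def IsLocallyFiniteGroup (A : Type*) [Group A] : Prop :=
  ∀ S : Set A, S.Finite → ((Subgroup.closure S : Subgroup A) : Set A).Finite

/-- The maximal locally finite subgroup graph of a partial group with data `(D, P, inv)` and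
unit `e`: vertices are the nontrivial maximal locally finite subgroups, and two distinct
vertices `N₁ ≠ N₂` are adjacent iff there are `h₁ ∈ N₁ ∖ {1}` and `h₂ ∈ N₂ ∖ {1}` with
`(h₁, h₂) ∈ D`. -/
def maxSubGraph {M : Type*} (D : Set (List M)) (P : List M → M) (inv : M → M) (e : M) :
    SimpleGraph {N : Set M // (IsLocFinSubgroupOf D P inv N ∧
        ∀ K : Set M, IsLocFinSubgroupOf D P inv K → N ⊆ K → K = N) ∧ ∃ x ∈ N, x ≠ e} :=
  SimpleGraph.fromRel fun N₁ N₂ =>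
    ∃ h₁ ∈ N₁.val, ∃ h₂ ∈ N₂.val, h₁ ≠ e ∧ h₂ ≠ e ∧ [h₁, h₂] ∈ D


/-! ### Auxiliary lemmas -/

section AuxLemmas

variable {ι : Type*} (H : ι → Type*) [∀ i, Group (H i)]
  [DecidableEq ι] [∀ i, DecidableEq (H i)] (G : SimpleGraph ι)

theorem red_of_isRed {l : List (Ltr H)} (h : IsRed H l) : red H l = l := by
  have h1 : listProd H l =
      CoprodI.Word.equiv.symm (⟨l, h.1, h.2⟩ : CoprodI.Word H) := rfl
  rw [red, h1, Equiv.apply_symm_apply]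

theorem red_congr {l l' : List (Ltr H)} (h : listProd H l = listProd H l') :
    red H l = red H l' := by rw [red, red, h]

theorem listProd_nil : listProd H ([] : List (Ltr H)) = 1 := rfl

theorem listProd_cons (x : Ltr H) (l : List (Ltr H)) :
    listProd H (x :: l) = CoprodI.of x.2 * listProd H l := by
  simp [listProd]

theorem listProd_append (l l' : List (Ltr H)) :
    listProd H (l ++ l') = listProd H l * listProd H l' := by
  simp [listProd]

/-- The one-letter (or empty) element of `M(G,H)` attached to `h : H v`. -/
def sing (v : ι) (h : H v) : Carrier H G :=
  if hne : h = 1 then one H G else ⟨[⟨v, h⟩], mem_single H G v h hne⟩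

theorem one_val : (one H G).val = [] := rfl

theorem sing_one (v : ι) : sing H G v 1 = one H G := dif_pos rfl

theorem listProd_sing (v : ι) (h : H v) :
    listProd H (sing H G v h).val = CoprodI.of h := by
  unfold sing
  by_cases hne : h = 1
  · erw [dif_pos hne]
    subst ‹h = 1›
    simp [one, listProd]
  · erw [dif_neg hne]
    simp [listProd]

theorem sing_injective (v : ι) : Function.Injective (sing H G v) := by
  intro a b hab
  apply CoprodI.of_injective v
  rw [← listProd_sing H G v a, hab, listProd_sing]

theorem red_mem (x : Carrier H G) : red H x.val = x.val :=
  red_of_isRed H x.property.1.1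

theorem index_of_mem_sing {v : ι} {a : H v} {x : Ltr H}
    (hx : x ∈ (sing H G v a).val) : x.1 = v := by
  unfold sing at hx
  by_cases hne : a = 1
  · erw [dif_pos hne] at hx
    simp [one] at hx
  · erw [dif_neg hne] at hx
    simp at hx
    subst hx
    rfl

theorem exists_of_singleIndex {v : ι} {l : List (Ltr H)} (hl : ∀ x ∈ l, x.1 = v) :
    ∃ h : H v, listProd H l = CoprodI.of h := by
  induction l with
  | nil => exact ⟨1, by simp [listProd]⟩
  | cons x t ih =>
    obtain ⟨h, hh⟩ := ih fun y hy => hl y (List.mem_cons_of_mem _ hy)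
    obtain ⟨i, g⟩ := x
    obtain rfl : i = v := hl ⟨i, g⟩ List.mem_cons_self
    exact ⟨g * h, by rw [listProd_cons, hh, map_mul]⟩

theorem red_singleIndex {v : ι} {l : List (Ltr H)} (hl : ∀ x ∈ l, x.1 = v) :
    ∃ h : H v, listProd H l = CoprodI.of h ∧ red H l = (sing H G v h).val := by
  obtain ⟨h, hh⟩ := exists_of_singleIndex H hl
  refine ⟨h, hh, ?_⟩
  have h2 : listProd H l = listProd H (sing H G v h).val := by
    rw [hh, listProd_sing]
  rw [red_congr H h2, red_mem]

theorem pgPi_val {W : List (Carrier H G)}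
    (h : Mem H G (red H (W.map Subtype.val).flatten)) :
    (pgPi H G W).val = red H (W.map Subtype.val).flatten := by
  unfold pgPi
  erw [dif_pos h]

end AuxLemmas

section AuxLemmas2

variable {ι : Type*} (H : ι → Type*) [∀ i, Group (H i)]
  [DecidableEq ι] [∀ i, DecidableEq (H i)] (G : SimpleGraph ι)

theorem clique_of_subset_singleton {s : Set ι} {v : ι} (h : s ⊆ {v}) :
    G.IsClique s := by
  intro a ha b hb hab
  exact absurd ((h ha).trans (h hb).symm) hab

theorem inD_of_singleIndex {v : ι} {W : List (Carrier H G)}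
    (hW : ∀ u ∈ W, ∀ x ∈ u.val, x.1 = v) : W ∈ pgD H G := by
  refine ⟨?_, ?_, ?_⟩
  · intro u hu
    obtain ⟨y, hy, rfl⟩ := List.mem_map.1 hu
    exact y.property
  · apply clique_of_subset_singleton
    rintro i ⟨u, hu, x, hx, rfl⟩
    obtain ⟨y, hy, rfl⟩ := List.mem_map.1 hu
    exact hW y hy x hx
  · intro i j hij hj
    have hseg : ∀ x ∈ (((W.map Subtype.val).drop i).take (j + 1 - i)).flatten, x.1 = v := by
      intro x hx
      obtain ⟨u, hu, hxu⟩ := List.mem_flatten.1 hx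
      have hu' : u ∈ W.map Subtype.val :=
        List.mem_of_mem_drop (List.mem_of_mem_take hu)
      obtain ⟨y, hy, rfl⟩ := List.mem_map.1 hu'
      exact hW y hy x hxu
    obtain ⟨h, -, hred⟩ := red_singleIndex H G hseg
    rw [hred]
    exact (sing H G v h).property.1

theorem pgPi_of_singleIndex {v : ι} {W : List (Carrier H G)}
    (hW : ∀ u ∈ W, ∀ x ∈ u.val, x.1 = v) :
    ∃ h : H v, listProd H (W.map Subtype.val).flatten = CoprodI.of h ∧
      pgPi H G W = sing H G v h := by
  have hseg : ∀ x ∈ (W.map Subtype.val).flatten, x.1 = v := by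
    intro x hx
    obtain ⟨u, hu, hxu⟩ := List.mem_flatten.1 hx
    obtain ⟨y, hy, rfl⟩ := List.mem_map.1 hu
    exact hW y hy x hxu
  obtain ⟨h, hp, hred⟩ := red_singleIndex H G hseg
  refine ⟨h, hp, ?_⟩
  apply Subtype.ext
  rw [pgPi_val H G (hred ▸ (sing H G v h).property), hred]

theorem rawInv_sing (v : ι) (h : H v) :
    rawInv H (sing H G v h).val = (sing H G v h⁻¹).val := by
  unfold sing
  by_cases h1 : h = 1
  · subst h1
    erw [dif_pos rfl, dif_pos inv_one]
    rfl
  · erw [dif_neg h1, dif_neg (inv_ne_one.2 h1)]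
    simp [rawInv]

theorem invCar_sing (v : ι) (h : H v) :
    invCar H G (sing H G v h) = sing H G v h⁻¹ := by
  have hm : Mem H G (rawInv H (sing H G v h).val) := by
    rw [rawInv_sing]
    exact (sing H G v h⁻¹).property
  apply Subtype.ext
  unfold invCar
  erw [dif_pos hm]
  exact rawInv_sing H G v h

theorem exists_prod_of_forall_sing {v : ι} (A : Subgroup (H v)) :
    ∀ (W : List (Carrier H G)), (∀ u ∈ W, u ∈ sing H G v '' (A : Set (H v))) →
      ∃ h ∈ A, listProd H (W.map Subtype.val).flatten = CoprodI.of h := by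
  intro W
  induction W with
  | nil => exact fun _ => ⟨1, A.one_mem, by erw [map_one]; rfl⟩
  | cons u t ih =>
    intro hmem
    obtain ⟨h, hh, hp⟩ := ih fun y hy => hmem y (List.mem_cons_of_mem _ hy)
    obtain ⟨a, ha, rfl⟩ := hmem u List.mem_cons_self
    refine ⟨a * h, A.mul_mem ha hh, ?_⟩
    erw [List.map_cons, List.flatten_cons, listProd_append, listProd_sing, hp, map_mul]

theorem isSubgroupOf_sing_image (v : ι) (A : Subgroup (H v)) :
    IsSubgroupOf (pgD H G) (pgPi H G) (invCar H G) (sing H G v '' (A : Set (H v))) := by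
  constructor
  · rintro x ⟨a, ha, rfl⟩
    rw [invCar_sing]
    exact ⟨a⁻¹, A.inv_mem ha, rfl⟩
  · intro W hWmem
    have hW : ∀ u ∈ W, ∀ x ∈ u.val, x.1 = v := by
      intro u hu x hx
      obtain ⟨a, ha, rfl⟩ := hWmem u hu
      exact index_of_mem_sing H G hx
    refine ⟨inD_of_singleIndex H G hW, ?_⟩
    obtain ⟨h, hA, hp⟩ := exists_prod_of_forall_sing H G A W hWmem
    obtain ⟨h', hp', heq⟩ := pgPi_of_singleIndex H G hW
    have : h' = h := CoprodI.of_injective v (by rw [← hp, ← hp'])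
    subst this
    exact ⟨h', hA, heq.symm⟩

end AuxLemmas2

section AuxLemmas3

variable {ι : Type*} (H : ι → Type*) [∀ i, Group (H i)]
  [DecidableEq ι] [∀ i, DecidableEq (H i)] (G : SimpleGraph ι)

theorem Htilde_eq (v : ι) :
    Htilde H G v = sing H G v '' ((⊤ : Subgroup (H v)) : Set (H v)) := by
  ext x
  constructor
  · rintro (hx | ⟨h, hne, hx⟩)
    · exact ⟨1, trivial, by rw [sing_one]; exact Subtype.ext hx.symm⟩
    · refine ⟨h, trivial, Subtype.ext ?_⟩
      rw [hx]
      unfold sing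
      erw [dif_neg hne]
  · rintro ⟨a, -, rfl⟩
    unfold sing
    by_cases hne : a = 1
    · erw [dif_pos hne]
      exact Or.inl rfl
    · erw [dif_neg hne]
      exact Or.inr ⟨a, ‹_›, rfl⟩

theorem Htilde_locFin (v : ι) (hlfv : IsLocallyFiniteGroup (H v)) :
    IsLocFinSubgroupOf (pgD H G) (pgPi H G) (invCar H G) (Htilde H G v) := by
  constructor
  · rw [Htilde_eq]
    exact isSubgroupOf_sing_image H G v ⊤
  · intro S hSN hSfin
    set T : Set (H v) := sing H G v ⁻¹' S with hT
    have hTfin : T.Finite :=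
      hSfin.preimage (Set.injOn_of_injective (sing_injective H G v))
    have hcl := hlfv T hTfin
    refine ⟨sing H G v '' ((Subgroup.closure T : Subgroup (H v)) : Set (H v)),
      ?_, ?_, isSubgroupOf_sing_image H G v _, hcl.image _⟩
    · intro x hx
      have hx' := hSN hx
      rw [Htilde_eq] at hx'
      obtain ⟨a, -, rfl⟩ := hx'
      exact ⟨a, Subgroup.subset_closure hx, rfl⟩
    · rintro x ⟨a, -, rfl⟩
      rw [Htilde_eq]
      exact ⟨a, trivial, rfl⟩

theorem isRed_flatten_replicate {l : List (Ltr H)} (hl : IsCycRed H l)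
    (h2 : 2 ≤ l.length) (m : ℕ) :
    IsRed H (List.flatten (List.replicate (m + 1) l)) ∧
      (List.flatten (List.replicate (m + 1) l)).head? = l.head? ∧
      (List.flatten (List.replicate (m + 1) l)).getLast? = l.getLast? := by
  have hlne : l ≠ [] := by
    intro h
    rw [h] at h2
    simp at h2
  induction m with
  | zero =>
    have h1 : List.flatten (List.replicate 1 l) = l := by simp
    rw [h1]
    exact ⟨hl.1, rfl, rfl⟩
  | succ m ih =>
    have hrep : List.replicate (m + 2) l = l :: List.replicate (m + 1) l := rfl
    rw [hrep, List.flatten_cons]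
    have hFne : (List.replicate (m + 1) l).flatten ≠ [] := by
      intro h
      rw [h] at ih
      simp [hlne] at ih
      exact hlne (List.head?_eq_none_iff.1 ih.2.1.symm)
    refine ⟨⟨?_, ?_⟩, ?_, ?_⟩
    · intro x hx
      rcases List.mem_append.1 hx with hx | hx
      · exact hl.1.1 x hx
      · exact ih.1.1 x hx
    · refine List.isChain_append.2 ⟨hl.1.2, ih.1.2, ?_⟩
      intro x hx y hy
      rw [ih.2.1] at hy
      exact (hl.2 y hy x hx h2).symm
    · exact List.head?_append_of_ne_nil _ hlne
    · rw [List.getLast?_append_of_ne_nil _ hFne, ih.2.2]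

theorem length_le_one_of_mem_locFin {N : Set (Carrier H G)}
    (hN : IsLocFinSubgroupOf (pgD H G) (pgPi H G) (invCar H G) N)
    {x : Carrier H G} (hx : x ∈ N) : x.val.length ≤ 1 := by
  by_contra hlen
  push_neg at hlen
  obtain ⟨K, hSK, hKN, hKsub, hKfin⟩ :=
    hN.2 {x} (by simpa using hx) (Set.finite_singleton x)
  have hxK : x ∈ K := hSK rfl
  have hl : IsCycRed H x.val := x.property.1
  have h2 : 2 ≤ x.val.length := hlen
  have key : ∀ m : ℕ, ∃ y ∈ K, y.val.length = (m + 1) * x.val.length := by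
    intro m
    have hW := hKsub.2 (List.replicate (m + 1) x)
      (fun u hu => by rw [List.eq_of_mem_replicate hu]; exact hxK)
    refine ⟨pgPi H G (List.replicate (m + 1) x), hW.2, ?_⟩
    have hmap : (List.replicate (m + 1) x).map Subtype.val
        = List.replicate (m + 1) x.val := List.map_replicate
    obtain ⟨hred, hh, hlast⟩ := isRed_flatten_replicate H hl h2 m
    have hflat : red H (List.replicate (m + 1) x.val).flatten
        = (List.replicate (m + 1) x.val).flatten := red_of_isRed H hred
    have hcyc : IsCycRed H (List.replicate (m + 1) x.val).flatten := by
      refine ⟨hred, ?_⟩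
      rw [hh, hlast]
      intro a ha b hb _
      exact hl.2 a ha b hb h2
    have hverts : verts H (List.replicate (m + 1) x.val).flatten ⊆ verts H x.val := by
      rintro i ⟨z, hz, rfl⟩
      obtain ⟨u, hu, hzu⟩ := List.mem_flatten.1 hz
      rw [List.eq_of_mem_replicate hu] at hzu
      exact ⟨z, hzu, rfl⟩
    have hMem : Mem H G (red H ((List.replicate (m + 1) x).map Subtype.val).flatten) := by
      rw [hmap, hflat]
      exact ⟨hcyc, x.property.2.subset hverts⟩
    rw [pgPi_val H G hMem, hmap, hflat]
    simp [List.length_flatten, List.map_replicate, List.sum_replicate, smul_eq_mul]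
  choose y hyK hylen using key
  have hinj : Function.Injective y := by
    intro a b hab
    have h1 : (a + 1) * x.val.length = (b + 1) * x.val.length := by
      rw [← hylen a, ← hylen b, hab]
    have h3 : a + 1 = b + 1 := Nat.eq_of_mul_eq_mul_right (by omega) h1
    omega
  exact hKfin.not_infinite (Set.infinite_of_injective_forall_mem hinj hyK)

end AuxLemmas3

section AuxLemmas4

variable {ι : Type*} (H : ι → Type*) [∀ i, Group (H i)]
  [DecidableEq ι] [∀ i, DecidableEq (H i)] (G : SimpleGraph ι)

theorem vertex_eq_of_locFin {N : Set (Carrier H G)}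
    (hN : IsLocFinSubgroupOf (pgD H G) (pgPi H G) (invCar H G) N)
    {x y : Carrier H G} (hx : x ∈ N) (hy : y ∈ N) {v w : ι} {g : H v} {k : H w}
    (hxv : x.val = [⟨v, g⟩]) (hyw : y.val = [⟨w, k⟩]) : v = w := by
  by_contra hvw
  have hg : g ≠ 1 := by
    have := x.property.1.1.1 ⟨v, g⟩ (by rw [hxv]; exact List.mem_singleton_self _)
    exact this
  have hk : k ≠ 1 := by
    have := y.property.1.1.1 ⟨w, k⟩ (by rw [hyw]; exact List.mem_singleton_self _)
    exact this
  have hxy := hN.1.2 [x, y] (by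
    intro u hu
    simp only [List.mem_cons, List.mem_singleton, List.not_mem_nil, or_false] at hu
    rcases hu with rfl | rfl
    · exact hx
    · exact hy)
  have hflat : ([x, y].map Subtype.val).flatten = [(⟨v, g⟩ : Ltr H), ⟨w, k⟩] := by
    show [x.val, y.val].flatten = _
    simp [hxv, hyw]
  have hred2 : IsRed H [(⟨v, g⟩ : Ltr H), ⟨w, k⟩] := by
    constructor
    · intro z hz
      simp only [List.mem_cons, List.mem_singleton, List.not_mem_nil, or_false] at hz
      rcases hz with rfl | rfl
      · exact hg
      · exact hk
    · exact List.isChain_cons_cons.2 ⟨hvw, List.isChain_singleton _⟩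
  have hredeq : red H ([x, y].map Subtype.val).flatten = [(⟨v, g⟩ : Ltr H), ⟨w, k⟩] := by
    rw [hflat]
    exact red_of_isRed H hred2
  have hclq := hxy.1.2.1
  have hMem : Mem H G (red H ([x, y].map Subtype.val).flatten) := by
    rw [hredeq]
    refine ⟨⟨hred2, ?_⟩, ?_⟩
    · intro a ha b hb _
      simp at ha hb
      subst ha
      subst hb
      exact hvw
    · refine hclq.subset ?_
      rintro i ⟨z, hz, rfl⟩
      simp only [List.mem_cons, List.mem_singleton, List.not_mem_nil, or_false] at hz
      rcases hz with rfl | rfl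
      · exact ⟨x.val, List.mem_map_of_mem List.mem_cons_self, ⟨_, by rw [hxv]; simp, rfl⟩⟩
      · exact ⟨y.val, List.mem_map_of_mem (List.mem_cons_of_mem _ (List.mem_singleton_self _)), ⟨_, by rw [hyw]; simp, rfl⟩⟩
  have hmemN := hxy.2
  have hlen := length_le_one_of_mem_locFin H G hN hmemN
  rw [pgPi_val H G hMem, hredeq] at hlen
  simp at hlen

theorem subset_Htilde_of_locFin {N : Set (Carrier H G)}
    (hN : IsLocFinSubgroupOf (pgD H G) (pgPi H G) (invCar H G) N)
    (hne : ∃ x ∈ N, x ≠ one H G) : ∃ v, N ⊆ Htilde H G v := by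
  obtain ⟨x, hxN, hxne⟩ := hne
  have hxval : x.val ≠ [] := fun h => hxne (Subtype.ext h)
  have hlen := length_le_one_of_mem_locFin H G hN hxN
  have hlen1 : x.val.length = 1 := by
    have := List.length_pos_iff.2 hxval
    omega
  obtain ⟨a, hxa⟩ := List.length_eq_one_iff.1 hlen1
  obtain ⟨v, g⟩ := a
  refine ⟨v, fun y hyN => ?_⟩
  rcases hy1 : y.val with _ | ⟨b, t⟩
  · exact Or.inl hy1
  · have hylen := length_le_one_of_mem_locFin H G hN hyN
    rw [hy1] at hylen
    simp at hylen
    have ht : t = [] := List.eq_nil_of_length_eq_zero (by simpa using hylen)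
    subst ht
    obtain ⟨w, k⟩ := b
    have hvw : v = w := vertex_eq_of_locFin H G hN hxN hyN hxa hy1
    subst hvw
    have hk : k ≠ 1 :=
      y.property.1.1.1 ⟨v, k⟩ (by rw [hy1]; exact List.mem_singleton_self _)
    exact Or.inr ⟨k, hk, hy1⟩

end AuxLemmas4

section AuxLemmas5

variable {ι : Type*} (H : ι → Type*) [∀ i, Group (H i)]
  [DecidableEq ι] [∀ i, DecidableEq (H i)] (G : SimpleGraph ι)

theorem mem_Htilde_ne_one {v : ι} {x : Carrier H G} (hx : x ∈ Htilde H G v)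
    (hne : x ≠ one H G) : ∃ h : H v, h ≠ 1 ∧ x.val = [⟨v, h⟩] := by
  rcases hx with h0 | hx
  · exact absurd (Subtype.ext h0) hne
  · exact hx

theorem exists_ne_one_Htilde (v : ι) [Nontrivial (H v)] :
    ∃ x ∈ Htilde H G v, x ≠ one H G := by
  obtain ⟨h0, hh0⟩ := exists_ne (1 : H v)
  exact ⟨⟨[⟨v, h0⟩], mem_single H G v h0 hh0⟩, Or.inr ⟨h0, hh0, rfl⟩,
    fun he => List.cons_ne_nil _ _ (congrArg Subtype.val he)⟩

theorem vertex_eq_of_mem_Htilde {v w : ι} {h : H v} {x : Carrier H G}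
    (hx : x.val = [⟨v, h⟩]) (hxw : x ∈ Htilde H G w) : v = w := by
  rcases hxw with h0 | ⟨k, _, hval⟩
  · rw [hx] at h0
    exact absurd h0 (List.cons_ne_nil _ _)
  · rw [hx] at hval
    injection hval with h1 _
    exact congrArg Sigma.fst h1

theorem Htilde_max (v : ι) [Nontrivial ((H v))] {K : Set (Carrier H G)}
    (hK : IsLocFinSubgroupOf (pgD H G) (pgPi H G) (invCar H G) K)
    (hsub : Htilde H G v ⊆ K) : K = Htilde H G v := by
  obtain ⟨x, hxH, hxne⟩ := exists_ne_one_Htilde H G v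
  obtain ⟨w, hKw⟩ := subset_Htilde_of_locFin H G hK ⟨x, hsub hxH, hxne⟩
  obtain ⟨h, _, hval⟩ := mem_Htilde_ne_one H G hxH hxne
  have hvw : v = w := vertex_eq_of_mem_Htilde H G hval (hKw (hsub hxH))
  subst hvw
  exact Set.Subset.antisymm hKw hsub

theorem Htilde_inj {v w : ι} [Nontrivial (H v)]
    (h : Htilde H G v = Htilde H G w) : v = w := by
  obtain ⟨x, hxH, hxne⟩ := exists_ne_one_Htilde H G v
  obtain ⟨g, _, hval⟩ := mem_Htilde_ne_one H G hxH hxne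
  exact vertex_eq_of_mem_Htilde H G hval (h ▸ hxH)

theorem clique_pair {v w : ι} (hGvw : G.Adj v w) {s : Set ι}
    (hs : ∀ i ∈ s, i = v ∨ i = w) : G.IsClique s := by
  intro a ha b hb hab
  rcases hs a ha with rfl | rfl <;> rcases hs b hb with rfl | rfl
  · exact absurd rfl hab
  · exact hGvw
  · exact hGvw.symm
  · exact absurd rfl hab

theorem pair_mem_pgD {v w : ι} (hGvw : G.Adj v w) {g : H v} {k : H w}
    (hg : g ≠ 1) (hk : k ≠ 1) :
    [(⟨[⟨v, g⟩], mem_single H G v g hg⟩ : Carrier H G),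
      ⟨[⟨w, k⟩], mem_single H G w k hk⟩] ∈ pgD H G := by
  have hvw : v ≠ w := G.ne_of_adj hGvw
  have hr1 : IsRed H [(⟨v, g⟩ : Ltr H)] := (isCycRed_single H _ hg).1
  have hr2 : IsRed H [(⟨w, k⟩ : Ltr H)] := (isCycRed_single H _ hk).1
  have hr12 : IsRed H [(⟨v, g⟩ : Ltr H), ⟨w, k⟩] := by
    constructor
    · intro z hz
      simp only [List.mem_cons, List.mem_singleton, List.not_mem_nil, or_false] at hz
      rcases hz with rfl | rfl
      · exact hg
      · exact hk
    · exact List.isChain_cons_cons.2 ⟨hvw, List.isChain_singleton _⟩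
  have hc12 : IsCycRed H [(⟨v, g⟩ : Ltr H), ⟨w, k⟩] := by
    refine ⟨hr12, ?_⟩
    intro a ha b hb _
    simp at ha hb
    subst ha
    subst hb
    exact hvw
  refine ⟨?_, ?_, ?_⟩
  · intro u hu
    simp only [List.map_cons, List.map_nil, List.mem_cons, List.mem_singleton,
      List.not_mem_nil, or_false] at hu
    rcases hu with rfl | rfl
    · exact mem_single H G v g hg
    · exact mem_single H G w k hk
  · apply clique_pair G hGvw
    rintro i ⟨u, hu, z, hz, rfl⟩
    simp only [List.map_cons, List.map_nil, List.mem_cons, List.mem_singleton,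
      List.not_mem_nil, or_false] at hu
    rcases hu with rfl | rfl
    · simp only [List.mem_singleton] at hz
      subst hz
      exact Or.inl rfl
    · simp only [List.mem_singleton] at hz
      subst hz
      exact Or.inr rfl
  · intro i j hij hj
    have hj2 : j < 2 := by simpa using hj
    clear hj
    interval_cases j <;> interval_cases i
    · have hl : ((([(⟨[⟨v, g⟩], mem_single H G v g hg⟩ : Carrier H G),
          ⟨[⟨w, k⟩], mem_single H G w k hk⟩].map Subtype.val).drop 0).take 1).flatten
          = [(⟨v, g⟩ : Ltr H)] := rfl
      rw [hl, red_of_isRed H hr1]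
      exact isCycRed_single H _ hg
    · have hl : ((([(⟨[⟨v, g⟩], mem_single H G v g hg⟩ : Carrier H G),
          ⟨[⟨w, k⟩], mem_single H G w k hk⟩].map Subtype.val).drop 0).take 2).flatten
          = [(⟨v, g⟩ : Ltr H), ⟨w, k⟩] := rfl
      rw [hl, red_of_isRed H hr12]
      exact hc12
    · have hl : ((([(⟨[⟨v, g⟩], mem_single H G v g hg⟩ : Carrier H G),
          ⟨[⟨w, k⟩], mem_single H G w k hk⟩].map Subtype.val).drop 1).take 1).flatten
          = [(⟨w, k⟩ : Ltr H)] := rfl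
      rw [hl, red_of_isRed H hr2]
      exact isCycRed_single H _ hk

end AuxLemmas5
/-- If all decorating groups are nontrivial and locally finite, then
`v ↦ H̃ᵥ` is a graph isomorphism from `G` onto the maximal locally finite subgroup graph of
`M(G,H)`. -/
theorem statement15 {ι : Type*} [Nonempty ι] (H : ι → Type*) [∀ i, Group (H i)]
    [DecidableEq ι] [∀ i, DecidableEq (H i)] (G : SimpleGraph ι)
    [∀ i, Nontrivial (H i)] (hlf : ∀ i, IsLocallyFiniteGroup (H i)) :
    ∃ e : G ≃g maxSubGraph (pgD H G) (pgPi H G) (invCar H G) (one H G),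
      ∀ v : ι, ((e v).val : Set (Carrier H G)) = Htilde H G v := by
  classical
  set V := {N : Set (Carrier H G) //
    (IsLocFinSubgroupOf (pgD H G) (pgPi H G) (invCar H G) N ∧
      ∀ K : Set (Carrier H G),
        IsLocFinSubgroupOf (pgD H G) (pgPi H G) (invCar H G) K → N ⊆ K → K = N) ∧
    ∃ x ∈ N, x ≠ one H G} with hV
  let f : ι → V := fun v => ⟨Htilde H G v,
    ⟨⟨Htilde_locFin H G v (hlf v), fun K hK hsub => Htilde_max H G v hK hsub⟩,
      exists_ne_one_Htilde H G v⟩⟩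
  have hfval : ∀ v, (f v).val = Htilde H G v := fun _ => rfl
  have hbij : Function.Bijective f := by
    constructor
    · intro v w hvw
      exact Htilde_inj H G (congrArg Subtype.val hvw)
    · rintro ⟨N, ⟨hlfN, hmax⟩, hnt⟩
      obtain ⟨v, hsub⟩ := subset_Htilde_of_locFin H G hlfN hnt
      refine ⟨v, Subtype.ext ?_⟩
      show Htilde H G v = N
      exact hmax (Htilde H G v) (Htilde_locFin H G v (hlf v)) hsub
  have hadj : ∀ v w : ι,
      (maxSubGraph (pgD H G) (pgPi H G) (invCar H G) (one H G)).Adj (f v) (f w) ↔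
        G.Adj v w := by
    intro v w
    rw [maxSubGraph, SimpleGraph.fromRel_adj]
    constructor
    · rintro ⟨hne, hrel | hrel⟩
      · obtain ⟨h₁, hh₁, h₂, hh₂, hne₁, hne₂, hD⟩ := hrel
        have hvw : v ≠ w := fun h => hne (by rw [h])
        obtain ⟨g, hg, hval₁⟩ := mem_Htilde_ne_one H G hh₁ hne₁
        obtain ⟨k, hk, hval₂⟩ := mem_Htilde_ne_one H G hh₂ hne₂
        have hclq := hD.2.1
        have hv : v ∈ {i | ∃ u ∈ [h₁, h₂].map Subtype.val, i ∈ verts H u} :=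
          ⟨h₁.val, List.mem_map_of_mem List.mem_cons_self, ⟨⟨v, g⟩, by rw [hval₁]; simp, rfl⟩⟩
        have hw : w ∈ {i | ∃ u ∈ [h₁, h₂].map Subtype.val, i ∈ verts H u} :=
          ⟨h₂.val, List.mem_map_of_mem (List.mem_cons_of_mem _ (List.mem_singleton_self _)), ⟨⟨w, k⟩, by rw [hval₂]; simp, rfl⟩⟩
        exact hclq hv hw hvw
      · obtain ⟨h₁, hh₁, h₂, hh₂, hne₁, hne₂, hD⟩ := hrel
        have hvw : w ≠ v := fun h => hne (by rw [h])
        obtain ⟨g, hg, hval₁⟩ := mem_Htilde_ne_one H G hh₁ hne₁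
        obtain ⟨k, hk, hval₂⟩ := mem_Htilde_ne_one H G hh₂ hne₂
        have hclq := hD.2.1
        have hv : w ∈ {i | ∃ u ∈ [h₁, h₂].map Subtype.val, i ∈ verts H u} :=
          ⟨h₁.val, List.mem_map_of_mem List.mem_cons_self, ⟨⟨w, g⟩, by rw [hval₁]; simp, rfl⟩⟩
        have hw : v ∈ {i | ∃ u ∈ [h₁, h₂].map Subtype.val, i ∈ verts H u} :=
          ⟨h₂.val, List.mem_map_of_mem (List.mem_cons_of_mem _ (List.mem_singleton_self _)), ⟨⟨v, k⟩, by rw [hval₂]; simp, rfl⟩⟩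
        exact (hclq hv hw hvw).symm
    · intro hGvw
      obtain ⟨g, hg⟩ := exists_ne (1 : H v)
      obtain ⟨k, hk⟩ := exists_ne (1 : H w)
      refine ⟨fun h => G.ne_of_adj hGvw (Htilde_inj H G (congrArg Subtype.val h)), Or.inl ?_⟩
      refine ⟨⟨[⟨v, g⟩], mem_single H G v g hg⟩, Or.inr ⟨g, hg, rfl⟩,
        ⟨[⟨w, k⟩], mem_single H G w k hk⟩, Or.inr ⟨k, hk, rfl⟩,
        fun he => List.cons_ne_nil _ _ (congrArg Subtype.val he),
        fun he => List.cons_ne_nil _ _ (congrArg Subtype.val he),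
        pair_mem_pgD H G hGvw hg hk⟩
  refine ⟨⟨Equiv.ofBijective f hbij, ?_⟩, fun v => rfl⟩
  intro a b
  exact hadj a b

end PaperPG
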